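/- arXiv:2111.12220 — 2 statements merged into one kernel-verified Lean document; each statement's English description precedes it below -/
import Mathlib

section
/- Let ρ, ρ₁, …, ρₙ (n ≥ 2) be d×d density matrices and p₁, …, pₙ real numbers with 0 < pₖ < 1 for each k, ∑ₖ pₖ = 1 and ρ = ∑ₖ pₖ ρₖ. For each k set Gₖ = (1 - pₖ) · C_{l1}((ρ - pₖ ρₖ)/(1 - pₖ)). Then (1/n) ∑ₖ [Gₖ + pₖ C_{l1}(ρₖ)] ≤ ∑ₖ pₖ C_{l1}(ρₖ); that is, the upper bound (1/n) ∑ₖ [Gₖ + pₖ C_{l1}(ρₖ)] on C_{l1}(ρ) is at most the convexity upper bound ∑ₖ pₖ C_{l1}(ρₖ). -/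
open Matrix BigOperators
open scoped ComplexOrder

/-- The l1-norm of coherence: sum of absolute values of all off-diagonal entries. -/
noncomputable def Cl1 {d : ℕ} (ρ : Matrix (Fin d) (Fin d) ℂ) : ℝ :=
  ∑ i, ∑ j, if i ≠ j then ‖ρ i j‖ else 0

/-- A density matrix: positive semidefinite with trace 1. -/
def IsDensityMatrix {d : ℕ} (ρ : Matrix (Fin d) (Fin d) ℂ) : Prop :=
  ρ.PosSemidef ∧ ρ.trace = 1

/-- Rank-one outer product |ψ⟩⟨ψ|. -/
noncomputable def outer {d : ℕ} (ψ : Fin d → ℂ) : Matrix (Fin d) (Fin d) ℂ :=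
  Matrix.of fun i j => ψ i * (starRingEnd ℂ) (ψ j)

/-- ψ is a unit vector in ℂ^d. -/
def IsUnitVec {d : ℕ} (ψ : Fin d → ℂ) : Prop :=
  ∑ i, Complex.normSq (ψ i) = 1

/-- The convex-roof l1-norm of coherence. -/
noncomputable def convexRoofCl1 {d : ℕ} (ρ : Matrix (Fin d) (Fin d) ℂ) : ℝ :=
  sInf { c : ℝ | ∃ (n : ℕ) (p : Fin n → ℝ) (ψ : Fin n → Fin d → ℂ),
    (∀ i, 0 ≤ p i) ∧ (∑ i, p i) = 1 ∧ (∀ i, IsUnitVec (ψ i)) ∧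
    ρ = ∑ i, p i • outer (ψ i) ∧
    c = ∑ i, p i * Cl1 (outer (ψ i)) }

/-! Deleting the `k`-th component from the mixture leaves `ρ - pₖ ρₖ = ∑_{j ≠ k} pⱼ ρⱼ`. Since
`C_{l1}` is absolutely homogeneous and subadditive, `Gₖ = C_{l1}(ρ - pₖ ρₖ) ≤ ∑_{j ≠ k} pⱼ C_{l1}(ρⱼ)`,
so every summand `Gₖ + pₖ C_{l1}(ρₖ)` is bounded by the convexity bound, and hence so is their
average. -/

section Cl1

variable {d : ℕ}

lemma Cl1_zero : Cl1 (0 : Matrix (Fin d) (Fin d) ℂ) = 0 := by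
  simp [Cl1]

lemma Cl1_add_le (A B : Matrix (Fin d) (Fin d) ℂ) : Cl1 (A + B) ≤ Cl1 A + Cl1 B := by
  unfold Cl1
  rw [← Finset.sum_add_distrib]
  gcongr with i _
  rw [← Finset.sum_add_distrib]
  gcongr with j _
  split_ifs
  · exact norm_add_le _ _
  · simp

lemma Cl1_smul (c : ℝ) (A : Matrix (Fin d) (Fin d) ℂ) : Cl1 (c • A) = |c| * Cl1 A := by
  simp only [Cl1, Finset.mul_sum, mul_ite, mul_zero, Matrix.smul_apply, norm_smul,
    Real.norm_eq_abs]

lemma Cl1_sum_le {ι : Type*} (s : Finset ι) (A : ι → Matrix (Fin d) (Fin d) ℂ) :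
    Cl1 (∑ i ∈ s, A i) ≤ ∑ i ∈ s, Cl1 (A i) :=
  Finset.le_sum_of_subadditive Cl1 Cl1_zero.le Cl1_add_le s A

lemma Cl1_sum_smul_le {ι : Type*} (s : Finset ι) {p : ι → ℝ} (hp : ∀ i ∈ s, 0 ≤ p i)
    (A : ι → Matrix (Fin d) (Fin d) ℂ) :
    Cl1 (∑ i ∈ s, p i • A i) ≤ ∑ i ∈ s, p i * Cl1 (A i) :=
  (Cl1_sum_le s _).trans <| Finset.sum_le_sum fun i hi => by
    rw [Cl1_smul, abs_of_nonneg (hp i hi)]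

lemma Cl1_sum_smul_sub_le {ι : Type*} [Fintype ι] [DecidableEq ι] {p : ι → ℝ}
    (hp : ∀ i, 0 ≤ p i) (A : ι → Matrix (Fin d) (Fin d) ℂ) (k : ι) :
    Cl1 (∑ i, p i • A i - p k • A k) ≤ ∑ i, p i * Cl1 (A i) - p k * Cl1 (A k) := by
  rw [← Finset.add_sum_erase _ _ (Finset.mem_univ k), add_sub_cancel_left,
    ← Finset.add_sum_erase _ _ (Finset.mem_univ k), add_sub_cancel_left]
  exact Cl1_sum_smul_le _ (fun i _ => hp i) A

end Cl1

theorem upper_bound_comparison_general {d n : ℕ}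
    (ρ : Matrix (Fin d) (Fin d) ℂ) (ρs : Fin n → Matrix (Fin d) (Fin d) ℂ)
    (p : Fin n → ℝ)
    (hp : ∀ k, 0 < p k ∧ p k < 1)
    (hmix : ρ = ∑ k, p k • ρs k)
    (G : Fin n → ℝ)
    (hG : ∀ k, G k = (1 - p k) * Cl1 ((1 - p k)⁻¹ • (ρ - p k • ρs k))) :
    (1 / (n : ℝ)) * ∑ k, (G k + p k * Cl1 (ρs k)) ≤ ∑ k, p k * Cl1 (ρs k) := by
  obtain rfl | hn := n.eq_zero_or_pos
  · simp
  have hterm : ∀ k, G k + p k * Cl1 (ρs k) ≤ ∑ j, p j * Cl1 (ρs j) := fun k => by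
    have hpk : 0 < 1 - p k := sub_pos.2 (hp k).2
    rw [hG k, Cl1_smul, abs_of_pos (inv_pos.2 hpk), mul_inv_cancel_left₀ hpk.ne', hmix]
    linarith [Cl1_sum_smul_sub_le (fun j => (hp j).1.le) ρs k]
  have hsum := Finset.sum_le_card_nsmul Finset.univ _ _ fun k _ => hterm k
  rw [Finset.card_univ, Fintype.card_fin, nsmul_eq_mul] at hsum
  rwa [one_div, inv_mul_le_iff₀ (by exact_mod_cast hn)]

/-- Theorem 2, Eq.(4): the new upper bound is at most the convexity upper bound. -/
theorem upper_bound_comparison {d n : ℕ} (hn : 2 ≤ n)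
    (ρ : Matrix (Fin d) (Fin d) ℂ) (ρs : Fin n → Matrix (Fin d) (Fin d) ℂ)
    (p : Fin n → ℝ)
    (hρ : IsDensityMatrix ρ) (hρs : ∀ k, IsDensityMatrix (ρs k))
    (hp : ∀ k, 0 < p k ∧ p k < 1) (hsum : ∑ k, p k = 1)
    (hmix : ρ = ∑ k, p k • ρs k)
    (G : Fin n → ℝ)
    (hG : ∀ k, G k = (1 - p k) * Cl1 ((1 - p k)⁻¹ • (ρ - p k • ρs k))) :
    (1 / (n : ℝ)) * ∑ k, (G k + p k * Cl1 (ρs k)) ≤ ∑ k, p k * Cl1 (ρs k) :=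
  upper_bound_comparison_general ρ ρs p hp hmix G hG
end

section
/- Let ρ be a d-dimensional density matrix and suppose exactly r of its diagonal entries are zero (necessarily 0 ≤ r ≤ d - 1). Then C_{l1}(ρ) ≤ d - r - 1. -/
open Matrix BigOperators
open scoped ComplexOrder

/-!
Every 2 × 2 principal minor of a positive semidefinite ρ is nonnegative, so
|ρ_ij|² ≤ ρ_ii ρ_jj; hence 2|ρ_ij| ≤ ρ_ii + ρ_jj, and the rows and columns through a vanishing
diagonal entry vanish. Summing 2|ρ_ij| ≤ ρ_ii + ρ_jj over the ordered pairs i ≠ j of the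
s = d - r indices with ρ_ii ≠ 0 counts every diagonal entry 2(s - 1) times, so
C_{l1}(ρ) ≤ (s - 1) tr ρ = d - r - 1.
-/

namespace Matrix.PosSemidef

variable {n 𝕜 : Type*} [RCLike 𝕜] {A : Matrix n n 𝕜}

theorem norm_apply_sq_le (hA : A.PosSemidef) (i j : n) :
    ‖A i j‖ ^ 2 ≤ RCLike.re (A i i) * RCLike.re (A j j) := by
  classical
  have hminor := (hA.submatrix ![i, j]).det_nonneg
  rw [det_fin_two] at hminor
  simp only [submatrix_apply, cons_val_zero, cons_val_one] at hminor
  rw [← hA.isHermitian.apply j i, RCLike.star_def, RCLike.mul_conj] at hminor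
  have hi := RCLike.nonneg_iff.mp (hA.diag_nonneg (i := i))
  have hj := RCLike.nonneg_iff.mp (hA.diag_nonneg (i := j))
  have hre := (RCLike.nonneg_iff.mp hminor).1
  rw [map_sub, RCLike.mul_re, hi.2, hj.2, ← RCLike.ofReal_pow, RCLike.ofReal_re] at hre
  linarith

theorem two_mul_norm_apply_le (hA : A.PosSemidef) (i j : n) :
    2 * ‖A i j‖ ≤ RCLike.re (A i i) + RCLike.re (A j j) := by
  have hi := (RCLike.nonneg_iff.mp (hA.diag_nonneg (i := i))).1
  have hj := (RCLike.nonneg_iff.mp (hA.diag_nonneg (i := j))).1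
  nlinarith [hA.norm_apply_sq_le i j, norm_nonneg (A i j),
    sq_nonneg (RCLike.re (A i i) - RCLike.re (A j j))]

theorem apply_eq_zero_of_diag_left (hA : A.PosSemidef) {i : n} (hi : A i i = 0) (j : n) :
    A i j = 0 := by
  simpa [hi] using hA.norm_apply_sq_le i j

theorem apply_eq_zero_of_diag_right (hA : A.PosSemidef) {j : n} (hj : A j j = 0) (i : n) :
    A i j = 0 := by
  simpa [hj] using hA.norm_apply_sq_le i j

end Matrix.PosSemidef

theorem Finset.sum_sum_ite_ne_add {ι R : Type*} [DecidableEq ι] [CommRing R]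
    (s : Finset ι) (a : ι → R) :
    ∑ i ∈ s, ∑ j ∈ s, (if i ≠ j then a i + a j else 0) = 2 * (s.card - 1) * ∑ i ∈ s, a i := by
  have hrow : ∀ i ∈ s, ∑ j ∈ s, (if i ≠ j then a i + a j else 0) =
      s.card * a i + ∑ j ∈ s, a j - 2 * a i := by
    intro i hi
    rw [← sum_filter, filter_ne, sum_erase_eq_sub hi, sum_add_distrib, sum_const, nsmul_eq_mul]
    ring
  rw [sum_congr rfl hrow, sum_sub_distrib, sum_add_distrib, ← mul_sum, ← mul_sum, sum_const,
    nsmul_eq_mul]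
  ring

theorem Cl1_eq_sum_diag_support {d : ℕ} {ρ : Matrix (Fin d) (Fin d) ℂ} (hρ : ρ.PosSemidef) :
    Cl1 ρ = ∑ i with ρ i i ≠ 0, ∑ j with ρ j j ≠ 0, if i ≠ j then ‖ρ i j‖ else 0 := by
  rw [Cl1, ← Finset.sum_filter_of_ne (p := fun i => ρ i i ≠ 0)]
  · refine Finset.sum_congr rfl fun i _ => ?_
    rw [← Finset.sum_filter_of_ne (p := fun j => ρ j j ≠ 0)]
    intro j _ hj
    contrapose! hj
    simp [hρ.apply_eq_zero_of_diag_right hj]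
  · intro i _ hi
    contrapose! hi
    simp [hρ.apply_eq_zero_of_diag_left hi]

/-- Theorem 6: if exactly r diagonal entries of ρ vanish, then C_{l1}(ρ) ≤ d - r - 1. -/
theorem cl1_le_of_zero_diagonal {d r : ℕ}
    (ρ : Matrix (Fin d) (Fin d) ℂ) (hρ : IsDensityMatrix ρ)
    (hr : (Finset.univ.filter fun i : Fin d => ρ i i = 0).card = r) :
    Cl1 ρ ≤ (d : ℝ) - r - 1 := by
  obtain ⟨hpsd, htr⟩ := hρ
  set S := Finset.univ.filter fun i : Fin d => ρ i i ≠ 0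
  have hcard : r + S.card = d := by
    rw [← hr]
    simpa using Finset.card_filter_add_card_filter_not (s := Finset.univ) fun i : Fin d => ρ i i = 0
  have htrace : ∑ i ∈ S, (ρ i i).re = 1 := by
    rw [← Complex.re_sum, Finset.sum_filter_ne_zero]
    simpa [Matrix.trace, Complex.re_sum] using congrArg Complex.re htr
  have hbound : 2 * Cl1 ρ ≤ 2 * (S.card - 1) * ∑ i ∈ S, (ρ i i).re := by
    rw [← Finset.sum_sum_ite_ne_add, Cl1_eq_sum_diag_support hpsd]
    simp_rw [Finset.mul_sum, mul_ite, mul_zero]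
    gcongr with i _ j _
    split_ifs
    exacts [hpsd.two_mul_norm_apply_le i j, le_rfl]
  have hd : (d : ℝ) = r + S.card := by exact_mod_cast hcard.symm
  rw [htrace] at hbound
  linarith
end
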